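/- Let α ∈ [0,1) and let P, Q ∈ F₂. Then the common trimming distance T_α(P,Q) := min_{h ∈ C_α} W₂(P_h, Q_h) equals zero if and only if there exist a probability space (Ω, F, ℙ), a random variable Z on it, and non-decreasing left-continuous functions φ₁, φ₂: ℝ → ℝ such that φ₁(Z) has law P, φ₂(Z) has law Q, and ℙ(φ₁(Z) ≠ φ₂(Z)) ≤ α. -/

import Mathlib

/-!
Both sides are equivalent to `𝕌 {F⁻¹ ≠ G⁻¹} ≤ α`, where `𝕌` is the uniform law on `(0,1)`.

Trimming by `h ∈ C_α` gives `P_h ≤ P / (1-α)`, so `P_h` and `Q_h` keep finite second moments and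
`W₂(P_h, Q_h) = 0` forces `P_h = Q_h`, i.e. `h ∘ F = h ∘ G`. Then `h' = 0` a.e. between `F q` and
`G q` for every rational `q`; these intervals cover `{F⁻¹ ≠ G⁻¹}`, and as `0 ≤ h' ≤ 1/(1-α)`
integrates to `1`, they have measure at most `α`. Conversely, the distribution function of `𝕌`
conditioned on `{F⁻¹ = G⁻¹}` lies in `C_α`, and `F⁻¹` and `G⁻¹` push that law to the same `P_h = Q_h`.

If `φ₁(Z) ~ P` and `ν` is the law of `Z`, then `φ₁ ∘ ν⁻¹` is monotone with law `P` under `𝕌`, hence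
equal to `F⁻¹` off countably many points; so `𝕌 {F⁻¹ ≠ G⁻¹} = ℙ(φ₁(Z) ≠ φ₂(Z))`. Conversely,
`φ₁ = F⁻¹ ∘ sigmoid` and `φ₂ = G⁻¹ ∘ sigmoid` applied to a logistic `Z` realise the bound.
-/

open MeasureTheory ProbabilityTheory Filter Topology Asymptotics
open scoped ENNReal NNReal

noncomputable section

/-- The (cumulative) distribution function of a Borel measure on `ℝ`. -/
def distFun (P : Measure ℝ) (x : ℝ) : ℝ := (P (Set.Iic x)).toReal

/-- The quantile function (left-continuous generalized inverse of the distribution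
function) of a Borel measure on `ℝ`. -/
def quant (P : Measure ℝ) (t : ℝ) : ℝ := sInf {x : ℝ | t ≤ distFun P x}

/-- The quadratic Wasserstein distance between two probabilities on the line,
expressed as the `L²` distance between quantile functions. -/
def W2 (P Q : Measure ℝ) : ℝ :=
  Real.sqrt (∫ t in Set.Ioo (0 : ℝ) 1, (quant P t - quant Q t) ^ 2)

/-- `W₂` distance between two sets of probabilities. -/
def W2Set (A B : Set (Measure ℝ)) : ℝ :=
  sInf {d : ℝ | ∃ R₁ ∈ A, ∃ R₂ ∈ B, d = W2 R₁ R₂}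

/-- `W₂` distance between a set of probabilities and a fixed probability. -/
def W2SetPt (A : Set (Measure ℝ)) (Q : Measure ℝ) : ℝ :=
  sInf {d : ℝ | ∃ R ∈ A, d = W2 R Q}

/-- The total variation distance `sup_B |P(B) - Q(B)|` over Borel sets `B`. -/
def dTV (P Q : Measure ℝ) : ℝ :=
  sSup {d : ℝ | ∃ B : Set ℝ, MeasurableSet B ∧ d = |(P B).toReal - (Q B).toReal|}

/-- The set of `α`-trimmed versions of `P`: probabilities `Q ≪ P` with
`dQ/dP ≤ 1/(1-α)` `P`-a.s. -/
def trimmings (α : ℝ) (P : Measure ℝ) : Set (Measure ℝ) :=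
  {Q | IsProbabilityMeasure Q ∧ Q ≪ P ∧
    ∀ᵐ x ∂P, Q.rnDeriv P x ≤ ENNReal.ofReal (1 / (1 - α))}

/-- The mixture `(1-ε)•P₀ + ε•P'`. -/
def mix (ε : ℝ) (P₀ P' : Measure ℝ) : Measure ℝ :=
  ENNReal.ofReal (1 - ε) • P₀ + ENNReal.ofReal ε • P'

/-- `P₁` and `P₂` are `α`-similar: both are contaminations (of size at most `α`)
of a common probability `P₀`. -/
def AlphaSimilar (α : ℝ) (P₁ P₂ : Measure ℝ) : Prop :=
  ∃ P₀ P₁' P₂' : Measure ℝ, ∃ ε₁ ε₂ : ℝ,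
    IsProbabilityMeasure P₀ ∧ IsProbabilityMeasure P₁' ∧ IsProbabilityMeasure P₂' ∧
    0 ≤ ε₁ ∧ ε₁ ≤ α ∧ 0 ≤ ε₂ ∧ ε₂ ≤ α ∧
    P₁ = mix ε₁ P₀ P₁' ∧ P₂ = mix ε₂ P₀ P₂'

/-- Membership in `F₂`: finite second moment. -/
def FiniteSecondMoment (P : Measure ℝ) : Prop :=
  ∫⁻ x, ENNReal.ofReal (x ^ 2) ∂P < ⊤

/-- Empirical measure of the first `n` variables of a sequence. -/
def empSeq {Ω : Type*} (X : ℕ → Ω → ℝ) (n : ℕ) (ω : Ω) : Measure ℝ :=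
  (n : ℝ≥0∞)⁻¹ • ∑ i ∈ Finset.range n, Measure.dirac (X i ω)

/-- Convergence in probability to a constant. -/
def TendstoInProb {Ω : Type*} [MeasurableSpace Ω] (Pr : Measure Ω)
    (f : ℕ → Ω → ℝ) (c : ℝ) : Prop :=
  ∀ ε > 0, Tendsto (fun n => Pr {ω | ε ≤ |f n ω - c|}) atTop (𝓝 0)

/-- `P` has density `f` (w.r.t. Lebesgue measure) which is bounded away from zero on
its support and has a bounded derivative (on the interior of the support). -/
structure NiceDensity (P : Measure ℝ) (f : ℝ → ℝ) : Prop where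
  nonneg : ∀ x, 0 ≤ f x
  meas : Measurable f
  eq : P = volume.withDensity fun x => ENNReal.ofReal (f x)
  pos : ∃ c > 0, ∀ x ∈ Function.support f, c ≤ f x
  diff : DifferentiableOn ℝ f (interior (Function.support f))
  bddDeriv : ∃ M, ∀ x ∈ interior (Function.support f), |deriv f x| ≤ M

/-- Empirical measure of the coordinates of a vector indexed by a finset. -/
def empVec {N : ℕ} (v : Fin N → ℝ) (s : Finset (Fin N)) : Measure ℝ :=
  (s.card : ℝ≥0∞)⁻¹ • ∑ i ∈ s, Measure.dirac (v i)

/-- The bootstrap p-value: the probability, under `R^{⊗(n'+m')}`, that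
`√(n'm'/(n'+m')) W₂(P*_{n'}, Q*_{m'})` exceeds the threshold `c`, where `P*_{n'}` and
`Q*_{m'}` are the empirical measures of the first `n'` and last `m'` coordinates. -/
def bootPval (R : Measure ℝ) (n' m' : ℕ) (c : ℝ) : ℝ :=
  ((Measure.pi fun _ : Fin (n' + m') => R)
    {v | c < Real.sqrt ((n' * m' : ℝ) / (n' + m')) *
      W2 (empVec v (Finset.univ.filter fun i => (i : ℕ) < n'))
         (empVec v (Finset.univ.filter fun i => n' ≤ (i : ℕ)))}).toReal


/-- `h` belongs to `C_α`, with (a.e.) derivative `h'`: `h` is absolutely continuous on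
`[0,1]` (it is the integral of `h'`), `h 0 = 0`, `h 1 = 1` and `0 ≤ h' ≤ 1/(1-α)`
almost everywhere on `[0,1]`. -/
def IsTrimmingFun (α : ℝ) (h h' : ℝ → ℝ) : Prop :=
  Measurable h' ∧
  (∀ᵐ y ∂(volume.restrict (Set.Icc (0 : ℝ) 1)), 0 ≤ h' y ∧ h' y ≤ 1 / (1 - α)) ∧
  (∀ x ∈ Set.Icc (0 : ℝ) 1, h x = ∫ y in Set.Ioc (0 : ℝ) x, h' y) ∧
  h 1 = 1

/-- Generalized inverse of a function on `[0,1]`. -/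
def funInv (h : ℝ → ℝ) (t : ℝ) : ℝ := sInf {x | x ∈ Set.Icc (0 : ℝ) 1 ∧ t ≤ h x}

open Set
open scoped Interval

local notation "𝕌" => volume.restrict (Ioo (0:ℝ) 1)

instance : IsProbabilityMeasure 𝕌 := ⟨by simp [Real.volume_Ioo]⟩

lemma unif_Iic {t : ℝ} (ht : t ∈ Icc (0:ℝ) 1) : 𝕌 (Iic t) = ENNReal.ofReal t := by
  rw [Measure.restrict_congr_set Ioo_ae_eq_Ioc, Measure.restrict_apply measurableSet_Iic,
    inter_comm, Ioc_inter_Iic, inf_eq_right.2 ht.2, Real.volume_Ioc, sub_zero]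

section Quantile

variable (P : Measure ℝ) [IsProbabilityMeasure P]

lemma distFun_eq_cdf (x : ℝ) : distFun P x = cdf P x := (cdf_eq_real P x).symm

lemma ofReal_distFun (x : ℝ) : ENNReal.ofReal (distFun P x) = P (Iic x) := by
  rw [distFun_eq_cdf, ofReal_cdf]

lemma distFun_mem_Icc (x : ℝ) : distFun P x ∈ Icc (0:ℝ) 1 := by
  rw [distFun_eq_cdf]; exact ⟨cdf_nonneg P x, cdf_le_one P x⟩

lemma distFun_mono : Monotone (distFun P) := fun x y hxy => by
  simpa only [distFun_eq_cdf] using (cdf P).mono hxy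

lemma quant_le_iff {t x : ℝ} (ht : t ∈ Ioo (0:ℝ) 1) : quant P t ≤ x ↔ t ≤ distFun P x := by
  simp only [quant, distFun_eq_cdf]
  have hne : {y | t ≤ cdf P y}.Nonempty :=
    ((tendsto_cdf_atTop P).eventually (eventually_ge_nhds ht.2)).exists
  obtain ⟨y₀, hy₀⟩ := eventually_atBot.1 ((tendsto_cdf_atBot P).eventually (eventually_lt_nhds ht.1))
  have hbdd : BddBelow {y | t ≤ cdf P y} :=
    ⟨y₀, fun y hy => le_of_not_gt fun hlt => (hy₀ y hlt.le).not_ge hy⟩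
  refine ⟨fun hx => le_trans ?_ ((cdf P).mono hx), fun hx => csInf_le hbdd hx⟩
  -- right-continuity of `cdf P` puts the infimum into the set
  refine ge_of_tendsto (((cdf P).right_continuous _).mono_left
    (nhdsWithin_mono _ Ioi_subset_Ici_self)) ?_
  filter_upwards [self_mem_nhdsWithin] with y hy
  obtain ⟨z, hz, hzy⟩ := exists_lt_of_csInf_lt hne hy
  exact le_trans hz ((cdf P).mono hzy.le)

lemma quant_monotoneOn : MonotoneOn (quant P) (Ioo 0 1) := fun _ hs _ ht hst =>
  (quant_le_iff P hs).2 (hst.trans ((quant_le_iff P ht).1 le_rfl))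

lemma quant_of_nonpos {t : ℝ} (ht : t ≤ 0) : quant P t = 0 := by
  have : {x | t ≤ distFun P x} = univ := eq_univ_of_forall fun x => ht.trans (distFun_mem_Icc P x).1
  rw [quant, this, Real.sInf_of_not_bddBelow not_bddBelow_univ]

lemma quant_of_one_lt {t : ℝ} (ht : 1 < t) : quant P t = 0 := by
  have : {x | t ≤ distFun P x} = ∅ :=
    eq_empty_of_forall_notMem fun x hx => (le_trans hx (distFun_mem_Icc P x).2).not_gt ht
  rw [quant, this, Real.sInf_empty]

lemma measurable_quant : Measurable (quant P) := by
  refine measurable_of_restrict_of_restrict_compl (s := Ioo 0 1) measurableSet_Ioo ?_ ?_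
  · exact Monotone.measurable fun s t hst => quant_monotoneOn P s.2 t.2 hst
  · have : (Ioo (0:ℝ) 1)ᶜ.domRestrict (quant P) =
        (Ioo (0:ℝ) 1)ᶜ.domRestrict (({1} : Set ℝ).indicator fun _ => quant P 1) := by
      ext ⟨t, ht⟩
      simp only [domRestrict_apply, indicator, mem_singleton_iff]
      split_ifs with h1
      · rw [h1]
      · rcases le_or_gt t 0 with h0 | h0
        · exact quant_of_nonpos P h0
        · exact quant_of_one_lt P (lt_of_le_of_ne (not_lt.1 fun h => ht ⟨h0, h⟩) (Ne.symm h1))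
    rw [this]
    exact (measurable_const.indicator (measurableSet_singleton 1)).comp measurable_subtype_coe

lemma continuousWithinAt_quant {t : ℝ} (ht : t ∈ Ioo (0:ℝ) 1) :
    ContinuousWithinAt (quant P) (Iio t) t := by
  refine tendsto_order.2 ⟨fun y hy => ?_, fun y hy => ?_⟩
  · have hFy : max (distFun P y) 0 < t :=
      max_lt (not_le.1 fun h => hy.not_ge ((quant_le_iff P ht).2 h)) ht.1
    filter_upwards [Ioo_mem_nhdsLT hFy] with s hs
    have hs01 : s ∈ Ioo (0:ℝ) 1 := ⟨(le_max_right _ _).trans_lt hs.1, hs.2.trans ht.2⟩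
    exact not_le.1 fun h => ((quant_le_iff P hs01).1 h).not_gt ((le_max_left _ _).trans_lt hs.1)
  · filter_upwards [Ioo_mem_nhdsLT ht.1] with s hs
    exact (quant_monotoneOn P ⟨hs.1, hs.2.trans ht.2⟩ ht hs.2.le).trans_lt hy

lemma map_quant_apply_Iic {μ : Measure ℝ} (hμ : ∀ᵐ t ∂μ, t ∈ Ioo (0:ℝ) 1) (x : ℝ) :
    μ.map (quant P) (Iic x) = μ (Iic (distFun P x)) := by
  rw [Measure.map_apply (measurable_quant P) measurableSet_Iic]
  refine measure_congr (eventuallyEq_set.2 ?_)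
  filter_upwards [hμ] with t ht using quant_le_iff P ht

lemma distFun_map_quant {μ : Measure ℝ} (hμ : ∀ᵐ t ∂μ, t ∈ Ioo (0:ℝ) 1) (x : ℝ) :
    distFun (μ.map (quant P)) x = distFun μ (distFun P x) := by
  rw [distFun, map_quant_apply_Iic P hμ]; rfl

lemma map_quant : Measure.map (quant P) 𝕌 = P := by
  refine Measure.ext_of_Iic _ _ fun x => ?_
  rw [map_quant_apply_Iic P (ae_restrict_mem measurableSet_Ioo), unif_Iic (distFun_mem_Icc P x),
    ofReal_distFun]

end Quantile

lemma quant_ae_eq_of_map_eq {ψ : ℝ → ℝ} (hψ : MonotoneOn ψ (Ioo 0 1)) (hψm : Measurable ψ)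
    {R : Measure ℝ} [IsProbabilityMeasure R] (hR : Measure.map ψ 𝕌 = R) :
    quant R =ᵐ[𝕌] ψ := by
  have hF (x : ℝ) : R (Iic x) = 𝕌 (ψ ⁻¹' Iic x) := by
    rw [← hR, Measure.map_apply hψm measurableSet_Iic]
  have hle : ∀ t ∈ Ioo (0:ℝ) 1, quant R t ≤ ψ t := by
    intro t ht
    rw [quant_le_iff R ht, ← ENNReal.ofReal_le_ofReal_iff (distFun_mem_Icc R _).1, ofReal_distFun,
      hF, ← unif_Iic ⟨ht.1.le, ht.2.le⟩]
    refine measure_mono_ae ?_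
    filter_upwards [ae_restrict_mem measurableSet_Ioo] with s hs (hst : s ≤ t)
    exact hψ hs ht hst
  -- where `quant R t < ψ t`, any rational `q` in between has `distFun R q = t`
  have hsub : {t | quant R t ≠ ψ t} ∩ Ioo 0 1 ⊆ range fun q : ℚ => distFun R q := by
    rintro t ⟨hne, ht⟩
    obtain ⟨q, hRq, hqψ⟩ := exists_rat_btwn ((hle t ht).lt_of_ne hne)
    refine ⟨q, le_antisymm ?_ ((quant_le_iff R ht).1 hRq.le)⟩
    rw [← ENNReal.ofReal_le_ofReal_iff ht.1.le, ofReal_distFun, hF, ← unif_Iic ⟨ht.1.le, ht.2.le⟩]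
    refine measure_mono_ae ?_
    filter_upwards [ae_restrict_mem measurableSet_Ioo] with s hs (hsq : ψ s ≤ q)
    exact le_of_not_gt fun hts => (hsq.trans_lt hqψ).not_ge (hψ ht hs hts.le)
  filter_upwards [ae_restrict_of_ae ((countable_range fun q : ℚ => distFun R q).ae_notMem volume),
    ae_restrict_mem measurableSet_Ioo] with t hq ht
  exact not_not.1 fun hne => hq (hsub ⟨hne, ht⟩)

lemma quant_ne_inter_subset (P Q : Measure ℝ) [IsProbabilityMeasure P] [IsProbabilityMeasure Q] :
    {t | quant P t ≠ quant Q t} ∩ Ioo 0 1 ⊆ ⋃ q : ℚ, Ι (distFun P q) (distFun Q q) := by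
  have key {P Q : Measure ℝ} [IsProbabilityMeasure P] [IsProbabilityMeasure Q] {t q : ℝ}
      (ht : t ∈ Ioo (0:ℝ) 1) (hP : quant P t < q) (hQ : q < quant Q t) :
      t ∈ Ioc (distFun Q q) (distFun P q) :=
    ⟨not_le.1 fun h => hQ.not_ge ((quant_le_iff Q ht).2 h), (quant_le_iff P ht).1 hP.le⟩
  rintro t ⟨hne, ht⟩
  rcases lt_or_gt_of_ne hne with hlt | hlt
  · obtain ⟨q, hPq, hqQ⟩ := exists_rat_btwn hlt
    exact mem_iUnion.2 ⟨q, Ioc_subset_uIoc' (key ht hPq hqQ)⟩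
  · obtain ⟨q, hQq, hqP⟩ := exists_rat_btwn hlt
    exact mem_iUnion.2 ⟨q, Ioc_subset_uIoc (key ht hQq hqP)⟩

lemma memLp_quant {P : Measure ℝ} [IsProbabilityMeasure P] (hP : FiniteSecondMoment P) :
    MemLp (quant P) 2 𝕌 := by
  rw [memLp_two_iff_integrable_sq (measurable_quant P).aestronglyMeasurable]
  refine ⟨((measurable_quant P).pow_const 2).aestronglyMeasurable, ?_⟩
  rw [hasFiniteIntegral_iff_ofReal (ae_of_all _ fun t => sq_nonneg _)]
  calc ∫⁻ t, ENNReal.ofReal (quant P t ^ 2) ∂𝕌 = ∫⁻ x, ENNReal.ofReal (x ^ 2) ∂P := by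
        rw [← map_quant P, lintegral_map (by fun_prop) (measurable_quant P), map_quant]
    _ < ⊤ := hP

lemma eq_of_W2_eq_zero {P Q : Measure ℝ} [IsProbabilityMeasure P] [IsProbabilityMeasure Q]
    (hP : FiniteSecondMoment P) (hQ : FiniteSecondMoment Q) (hW : W2 P Q = 0) : P = Q := by
  have hint : ∫ t in Ioo (0:ℝ) 1, (quant P t - quant Q t) ^ 2 = 0 :=
    (Real.sqrt_eq_zero (integral_nonneg fun _ => sq_nonneg _)).1 hW
  have hae : quant P =ᵐ[𝕌] quant Q := by
    filter_upwards [(integral_eq_zero_iff_of_nonneg (fun _ => sq_nonneg _)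
      ((memLp_quant hP).sub (memLp_quant hQ)).integrable_sq).1 hint] with t ht
    exact sub_eq_zero.1 (pow_eq_zero_iff two_ne_zero |>.1 ht)
  rw [← map_quant P, ← map_quant Q, Measure.map_congr hae]

lemma le_smul_of_cdf_sub_le {R P : Measure ℝ} [IsProbabilityMeasure R] [IsProbabilityMeasure P]
    {L : ℝ} (hL : 0 ≤ L) (hRP : ∀ a b, a ≤ b → cdf R b - cdf R a ≤ L * (cdf P b - cdf P a)) :
    R ≤ ENNReal.ofReal L • P := by
  -- `L • cdf P - cdf R` is itself a Stieltjes function; its measure is `L • P - R`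
  let S : StieltjesFunction ℝ :=
    { toFun := fun x => L * cdf P x - cdf R x
      mono' := fun a b hab => by linarith [hRP a b hab]
      right_continuous' := fun x => (continuousWithinAt_const.mul
        ((cdf P).right_continuous x)).sub ((cdf R).right_continuous x) }
  have hbot : Tendsto S atBot (𝓝 0) := by
    simpa using ((tendsto_cdf_atBot P).const_mul L).sub (tendsto_cdf_atBot R)
  have htop : Tendsto S atTop (𝓝 (L - 1)) := by
    simpa using ((tendsto_cdf_atTop P).const_mul L).sub (tendsto_cdf_atTop R)
  have : IsFiniteMeasure S.measure := ⟨by simp [S.measure_univ hbot htop]⟩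
  have hS : R + S.measure = ENNReal.ofReal L • P := by
    refine Measure.ext_of_Iic _ _ fun x => ?_
    have hSx : 0 ≤ S x := le_of_tendsto hbot (eventually_atBot.2 ⟨x, fun y hy => S.mono hy⟩)
    rw [Measure.add_apply, S.measure_Iic hbot, sub_zero, Measure.smul_apply, smul_eq_mul,
      ← ofReal_cdf, ← ofReal_cdf, ← ENNReal.ofReal_mul hL, ← ENNReal.ofReal_add (cdf_nonneg R x) hSx]
    congr 1
    change cdf R x + (L * cdf P x - cdf R x) = L * cdf P x
    ring
  exact hS ▸ Measure.le_add_right le_rfl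

lemma FiniteSecondMoment.of_le_smul {μ ν : Measure ℝ} {c : ℝ≥0∞} (hc : c ≠ ⊤) (hνμ : ν ≤ c • μ)
    (hμ : FiniteSecondMoment μ) : FiniteSecondMoment ν :=
  calc ∫⁻ x, ENNReal.ofReal (x ^ 2) ∂ν ≤ ∫⁻ x, ENNReal.ofReal (x ^ 2) ∂(c • μ) :=
        lintegral_mono' hνμ le_rfl
    _ = c * ∫⁻ x, ENNReal.ofReal (x ^ 2) ∂μ := lintegral_smul_measure _ _
    _ < ⊤ := ENNReal.mul_lt_top hc.lt_top hμ

namespace IsTrimmingFun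

variable {α : ℝ} {h h' : ℝ → ℝ}

lemma norm_le (ht : IsTrimmingFun α h h') :
    ∀ᵐ y ∂volume.restrict (Icc 0 1), ‖h' y‖ ≤ 1 / (1 - α) := by
  filter_upwards [ht.2.1] with y hy
  rw [Real.norm_eq_abs, abs_of_nonneg hy.1]
  exact hy.2

lemma integrableOn (ht : IsTrimmingFun α h h') : IntegrableOn h' (Icc 0 1) :=
  Measure.integrableOn_of_bounded measure_Icc_lt_top.ne ht.1.aestronglyMeasurable ht.norm_le

lemma sub_eq_setIntegral (ht : IsTrimmingFun α h h') {u v : ℝ} (hu : 0 ≤ u) (huv : u ≤ v)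
    (hv : v ≤ 1) : h v - h u = ∫ y in Ioc u v, h' y := by
  have hint (w : ℝ) (hw : w ≤ 1) : IntegrableOn h' (Ioc 0 w) :=
    ht.integrableOn.mono_set fun y hy => ⟨hy.1.le, hy.2.trans hw⟩
  rw [ht.2.2.1 v ⟨hu.trans huv, hv⟩, ht.2.2.1 u ⟨hu, huv.trans hv⟩, ← Ioc_union_Ioc_eq_Ioc hu huv,
    setIntegral_union (Ioc_disjoint_Ioc_of_le le_rfl) measurableSet_Ioc (hint u (huv.trans hv))
      (ht.integrableOn.mono_set fun y hy => ⟨hu.trans hy.1.le, hy.2.trans hv⟩), add_sub_cancel_left]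

lemma sub_le (ht : IsTrimmingFun α h h') {u v : ℝ} (hu : 0 ≤ u) (huv : u ≤ v) (hv : v ≤ 1) :
    h v - h u ≤ 1 / (1 - α) * (v - u) := by
  have hsub : Ioc u v ⊆ Icc 0 1 := fun y hy => ⟨hu.trans hy.1.le, hy.2.trans hv⟩
  rw [ht.sub_eq_setIntegral hu huv hv]
  calc ∫ y in Ioc u v, h' y ≤ ‖∫ y in Ioc u v, h' y‖ := le_abs_self _
    _ ≤ 1 / (1 - α) * volume.real (Ioc u v) := norm_setIntegral_le_of_norm_le_const_ae
        measure_Ioc_lt_top (ae_restrict_of_ae_restrict_of_subset hsub ht.norm_le)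
    _ = 1 / (1 - α) * (v - u) := by rw [Real.volume_real_Ioc_of_le huv]

lemma ae_eq_zero_of_eq (ht : IsTrimmingFun α h h') {u v : ℝ} (hu : u ∈ Icc (0:ℝ) 1)
    (hv : v ∈ Icc (0:ℝ) 1) (huv : h u = h v) : ∀ᵐ y ∂volume.restrict (Ι u v), h' y = 0 := by
  wlog hle : u ≤ v generalizing u v
  · rw [uIoc_comm]; exact this hv hu huv.symm (le_of_not_ge hle)
  have hsub : Ioc u v ⊆ Icc 0 1 := fun y hy => ⟨hu.1.trans hy.1.le, hy.2.trans hv.2⟩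
  rw [uIoc_of_le hle]
  refine (setIntegral_eq_zero_iff_of_nonneg_ae ?_ (ht.integrableOn.mono_set hsub)).1 ?_
  · filter_upwards [ae_restrict_of_ae_restrict_of_subset hsub ht.2.1] with y hy using hy.1
  · rw [← ht.sub_eq_setIntegral hu.1 hle hv.2, huv, sub_self]

lemma unif_le_of_ae_eq_zero (ht : IsTrimmingFun α h h') (hα1 : α < 1) {N : Set ℝ}
    (hN : MeasurableSet N) (h0 : ∀ᵐ y ∂volume.restrict N, h' y = 0) : 𝕌 N ≤ ENNReal.ofReal α := by
  have hbound : ∀ᵐ y ∂𝕌, ‖h' y‖ ≤ 1 / (1 - α) :=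
    ae_restrict_of_ae_restrict_of_subset Ioo_subset_Icc_self ht.norm_le
  have hint : Integrable h' 𝕌 := ht.integrableOn.mono_set Ioo_subset_Icc_self
  have hone : ∫ y in Ioo (0:ℝ) 1, h' y = 1 := by
    rw [setIntegral_congr_set Ioo_ae_eq_Ioc, ← ht.2.2.1 1 ⟨zero_le_one, le_rfl⟩, ht.2.2.2]
  have hzero : ∫ y in N, h' y ∂𝕌 = 0 := by
    refine integral_eq_zero_of_ae ?_
    rw [Measure.restrict_comm hN]
    exact ae_restrict_of_ae h0
  -- `h'` integrates to `1`, lives off `N` and is at most `1/(1-α)`, so `Nᶜ` has measure `≥ 1-α`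
  have hcompl : 1 ≤ 1 / (1 - α) * (1 - Measure.real 𝕌 N) := by
    rw [← integral_add_compl hN hint, hzero, zero_add] at hone
    calc (1 : ℝ) = ∫ y in Nᶜ, h' y ∂𝕌 := hone.symm
      _ ≤ ‖∫ y in Nᶜ, h' y ∂𝕌‖ := le_abs_self _
      _ ≤ 1 / (1 - α) * Measure.real 𝕌 Nᶜ :=
          norm_setIntegral_le_of_norm_le_const_ae (measure_lt_top _ _) (ae_restrict_of_ae hbound)
      _ = 1 / (1 - α) * (1 - Measure.real 𝕌 N) := by rw [probReal_compl_eq_one_sub hN]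
  rw [← ofReal_measureReal]
  refine ENNReal.ofReal_le_ofReal ?_
  rw [div_mul_eq_mul_div, one_mul, le_div_iff₀ (by linarith)] at hcompl
  linarith

lemma finiteSecondMoment (ht : IsTrimmingFun α h h') (hα1 : α < 1) {P R : Measure ℝ}
    [IsProbabilityMeasure P] [IsProbabilityMeasure R] (hR : ∀ x, distFun R x = h (distFun P x))
    (hP : FiniteSecondMoment P) : FiniteSecondMoment R := by
  refine hP.of_le_smul ENNReal.ofReal_ne_top
    (le_smul_of_cdf_sub_le (one_div_nonneg.2 (sub_nonneg.2 hα1.le)) fun a b hab => ?_)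
  simp only [← distFun_eq_cdf, hR]
  exact ht.sub_le (distFun_mem_Icc P a).1 (distFun_mono P hab) (distFun_mem_Icc P b).2

lemma unif_quant_ne_le (ht : IsTrimmingFun α h h') (hα1 : α < 1) {P Q : Measure ℝ}
    [IsProbabilityMeasure P] [IsProbabilityMeasure Q] (hPQ : ∀ x, h (distFun P x) = h (distFun Q x)) :
    𝕌 {t | quant P t ≠ quant Q t} ≤ ENNReal.ofReal α := by
  set N := ⋃ q : ℚ, Ι (distFun P q) (distFun Q q)
  have h0 : ∀ᵐ y ∂volume.restrict N, h' y = 0 := (ae_restrict_iUnion_iff _ _).2 fun q =>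
    ht.ae_eq_zero_of_eq (distFun_mem_Icc P q) (distFun_mem_Icc Q q) (hPQ q)
  calc 𝕌 {t | quant P t ≠ quant Q t} ≤ 𝕌 N := by
        refine measure_mono_ae ?_
        filter_upwards [ae_restrict_mem measurableSet_Ioo] with t ht hne
        exact quant_ne_inter_subset P Q ⟨hne, ht⟩
    _ ≤ ENNReal.ofReal α :=
        ht.unif_le_of_ae_eq_zero hα1 (MeasurableSet.iUnion fun _ => measurableSet_uIoc) h0

end IsTrimmingFun

lemma unif_quant_ne_le_of_trimming {α : ℝ} (hα1 : α < 1) {P Q : Measure ℝ}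
    [IsProbabilityMeasure P] [IsProbabilityMeasure Q] (hmP : FiniteSecondMoment P)
    (hmQ : FiniteSecondMoment Q) {h h' : ℝ → ℝ} (ht : IsTrimmingFun α h h')
    {Ph Qh : Measure ℝ} [IsProbabilityMeasure Ph] [IsProbabilityMeasure Qh]
    (hPh : ∀ x, distFun Ph x = h (distFun P x)) (hQh : ∀ x, distFun Qh x = h (distFun Q x))
    (hW : W2 Ph Qh = 0) : 𝕌 {t | quant P t ≠ quant Q t} ≤ ENNReal.ofReal α := by
  have hPQ : Ph = Qh :=
    eq_of_W2_eq_zero (ht.finiteSecondMoment hα1 hPh hmP) (ht.finiteSecondMoment hα1 hQh hmQ) hW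
  exact ht.unif_quant_ne_le hα1 fun x => by rw [← hPh, ← hQh, hPQ]

lemma isTrimmingFun_distFun_cond {α : ℝ} (hα1 : α < 1) {E : Set ℝ} (hE : MeasurableSet E)
    (hEα : 1 - α ≤ Measure.real 𝕌 E) :
    IsTrimmingFun α (distFun 𝕌[|E]) ((Ioo 0 1 ∩ E).indicator fun _ => (Measure.real 𝕌 E)⁻¹) := by
  have hpos : 0 < Measure.real 𝕌 E := by linarith
  have : IsProbabilityMeasure 𝕌[|E] := cond_isProbabilityMeasure ((measureReal_ne_zero_iff).1 hpos.ne')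
  refine ⟨measurable_const.indicator (measurableSet_Ioo.inter hE), ae_of_all _ fun y => ⟨?_, ?_⟩,
    fun x _ => ?_, ?_⟩
  · exact indicator_nonneg (fun _ _ => (inv_pos.2 hpos).le) y
  · refine indicator_apply_le' (fun _ => ?_) (fun _ => by have := sub_pos.2 hα1; positivity)
    rw [one_div]
    exact inv_anti₀ (by linarith) hEα
  · rw [setIntegral_indicator (measurableSet_Ioo.inter hE), setIntegral_const, smul_eq_mul, distFun,
      cond_apply hE, ENNReal.toReal_mul, ENNReal.toReal_inv, ← Measure.real,
      ← Measure.real, measureReal_restrict_apply (hE.inter measurableSet_Iic), mul_comm]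
    congr 2
    ext y
    simp only [mem_inter_iff, mem_Iic, mem_Ioc, mem_Ioo]
    tauto
  · have hμ : ∀ᵐ t ∂𝕌[|E], t ∈ Iic (1:ℝ) := cond_absolutelyContinuous.ae_le
      (ae_restrict_mem measurableSet_Ioo |>.mono fun t ht => ht.2.le)
    have h1 : 𝕌[|E] (Iic 1) = 1 := by
      rw [← measure_univ (μ := 𝕌[|E])]
      exact (ae_iff_measure_eq measurableSet_Iic.nullMeasurableSet).1 hμ
    rw [distFun, h1, ENNReal.toReal_one]

lemma exists_trimming_of_unif_le {α : ℝ} (hα0 : 0 ≤ α) (hα1 : α < 1) (P Q : Measure ℝ)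
    [IsProbabilityMeasure P] [IsProbabilityMeasure Q]
    (hPQ : 𝕌 {t | quant P t ≠ quant Q t} ≤ ENNReal.ofReal α) :
    ∃ h h' : ℝ → ℝ, IsTrimmingFun α h h' ∧
      ∃ Ph Qh : Measure ℝ, IsProbabilityMeasure Ph ∧ IsProbabilityMeasure Qh ∧
        (∀ x, distFun Ph x = h (distFun P x)) ∧
        (∀ x, distFun Qh x = h (distFun Q x)) ∧
        W2 Ph Qh = 0 := by
  set E := {t | quant P t = quant Q t}
  have hE : MeasurableSet E := measurableSet_eq_fun (measurable_quant P) (measurable_quant Q)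
  have hEα : 1 - α ≤ Measure.real 𝕌 E := by
    have := ENNReal.toReal_le_of_le_ofReal hα0 hPQ
    change Measure.real 𝕌 Eᶜ ≤ α at this
    rw [probReal_compl_eq_one_sub hE] at this
    linarith
  have : IsProbabilityMeasure 𝕌[|E] :=
    cond_isProbabilityMeasure ((measureReal_ne_zero_iff).1 (by linarith))
  have hμ : ∀ᵐ t ∂𝕌[|E], t ∈ Ioo (0:ℝ) 1 :=
    cond_absolutelyContinuous.ae_le (ae_restrict_mem measurableSet_Ioo)
  have hmap : Measure.map (quant Q) 𝕌[|E] = Measure.map (quant P) 𝕌[|E] :=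
    Measure.map_congr (by filter_upwards [ae_cond_mem hE] with t ht using ht.symm)
  have : IsProbabilityMeasure (Measure.map (quant P) 𝕌[|E]) :=
    Measure.isProbabilityMeasure_map (measurable_quant P).aemeasurable
  refine ⟨_, _, isTrimmingFun_distFun_cond hα1 hE hEα, Measure.map (quant P) 𝕌[|E],
    Measure.map (quant P) 𝕌[|E], inferInstance, inferInstance, distFun_map_quant P hμ,
    fun x => ?_, by simp [W2]⟩
  rw [← hmap, distFun_map_quant Q hμ]

lemma unif_quant_ne_le_of_monotone_transforms {α : ℝ} {P Q : Measure ℝ} [IsProbabilityMeasure P]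
    [IsProbabilityMeasure Q] {Ω : Type*} [MeasurableSpace Ω] {Pr : Measure Ω}
    [IsProbabilityMeasure Pr] {Z : Ω → ℝ} {φ₁ φ₂ : ℝ → ℝ} (hZ : Measurable Z)
    (hφ₁ : Monotone φ₁) (hφ₂ : Monotone φ₂) (hP : Measure.map (fun ω => φ₁ (Z ω)) Pr = P)
    (hQ : Measure.map (fun ω => φ₂ (Z ω)) Pr = Q) (hα : Pr {ω | φ₁ (Z ω) ≠ φ₂ (Z ω)} ≤ ENNReal.ofReal α) :
    𝕌 {t | quant P t ≠ quant Q t} ≤ ENNReal.ofReal α := by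
  set ν := Measure.map Z Pr
  have : IsProbabilityMeasure ν := Measure.isProbabilityMeasure_map hZ.aemeasurable
  have hmap {φ : ℝ → ℝ} (hφ : Monotone φ) : Measure.map (φ ∘ quant ν) 𝕌 = Measure.map (φ ∘ Z) Pr := by
    rw [← Measure.map_map hφ.measurable (measurable_quant ν), map_quant, Measure.map_map hφ.measurable hZ]
  have h₁ := quant_ae_eq_of_map_eq (hφ₁.comp_monotoneOn (quant_monotoneOn ν))
    (hφ₁.measurable.comp (measurable_quant ν)) ((hmap hφ₁).trans hP)
  have h₂ := quant_ae_eq_of_map_eq (hφ₂.comp_monotoneOn (quant_monotoneOn ν))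
    (hφ₂.measurable.comp (measurable_quant ν)) ((hmap hφ₂).trans hQ)
  have hne : MeasurableSet {x | φ₁ x ≠ φ₂ x} :=
    (measurableSet_eq_fun hφ₁.measurable hφ₂.measurable).compl
  calc 𝕌 {t | quant P t ≠ quant Q t} = 𝕌 (quant ν ⁻¹' {x | φ₁ x ≠ φ₂ x}) := by
        refine measure_congr (eventuallyEq_set.2 ?_)
        filter_upwards [h₁, h₂] with t e₁ e₂
        simp only [mem_ofPred_eq, mem_preimage, e₁, e₂, Function.comp_apply]
    _ = Pr (Z ⁻¹' {x | φ₁ x ≠ φ₂ x}) := by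
        rw [← Measure.map_apply (measurable_quant ν) hne, map_quant, Measure.map_apply hZ hne]
    _ ≤ ENNReal.ofReal α := hα

lemma exists_monotone_transforms_of_unif_le {α : ℝ} (P Q : Measure ℝ) [IsProbabilityMeasure P]
    [IsProbabilityMeasure Q] (hPQ : 𝕌 {t | quant P t ≠ quant Q t} ≤ ENNReal.ofReal α) :
    ∃ (Ω : Type) (_ : MeasurableSpace Ω) (Pr : Measure Ω), IsProbabilityMeasure Pr ∧
      ∃ (Z : Ω → ℝ) (φ₁ φ₂ : ℝ → ℝ), Measurable Z ∧
        Monotone φ₁ ∧ Monotone φ₂ ∧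
        (∀ x, ContinuousWithinAt φ₁ (Set.Iio x) x) ∧
        (∀ x, ContinuousWithinAt φ₂ (Set.Iio x) x) ∧
        Measure.map (fun ω => φ₁ (Z ω)) Pr = P ∧
        Measure.map (fun ω => φ₂ (Z ω)) Pr = Q ∧
        Pr {ω | φ₁ (Z ω) ≠ φ₂ (Z ω)} ≤ ENNReal.ofReal α := by
  -- `Z` is logistic: `sigmoid Z` is uniform on `(0,1)`
  have hσ : MeasurableEmbedding Real.sigmoid :=
    (MeasurableEmbedding.subtype_coe measurableSet_Icc).comp measurableEmbedding_sigmoid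
  have hmap : Measure.map Real.sigmoid (Measure.comap Real.sigmoid 𝕌) = 𝕌 := by
    rw [hσ.map_comap, Real.range_sigmoid, Measure.restrict_restrict measurableSet_Ioo, inter_self]
  have : IsProbabilityMeasure (Measure.comap Real.sigmoid 𝕌) :=
    ⟨by rw [← preimage_univ (f := Real.sigmoid), ← Measure.map_apply hσ.measurable .univ, hmap,
      measure_univ]⟩
  have hσ01 (x : ℝ) : Real.sigmoid x ∈ Ioo (0:ℝ) 1 := ⟨Real.sigmoid_pos x, Real.sigmoid_lt_one x⟩
  have hmono (R : Measure ℝ) [IsProbabilityMeasure R] : Monotone (quant R ∘ Real.sigmoid) :=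
    fun x y hxy => quant_monotoneOn R (hσ01 x) (hσ01 y) (Real.sigmoid_le hxy)
  have hcont (R : Measure ℝ) [IsProbabilityMeasure R] (x : ℝ) :
      ContinuousWithinAt (quant R ∘ Real.sigmoid) (Iio x) x :=
    (continuousWithinAt_quant R (hσ01 x)).comp continuous_sigmoid.continuousWithinAt
      fun _ hy => Real.sigmoid_lt hy
  have hlaw (R : Measure ℝ) [IsProbabilityMeasure R] :
      Measure.map (quant R ∘ Real.sigmoid) (Measure.comap Real.sigmoid 𝕌) = R := by
    rw [← Measure.map_map (measurable_quant R) hσ.measurable, hmap, map_quant]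
  refine ⟨ℝ, inferInstance, _, inferInstance, id, _, _, measurable_id, hmono P, hmono Q, hcont P,
    hcont Q, hlaw P, hlaw Q, ?_⟩
  have hne : MeasurableSet {t | quant P t ≠ quant Q t} :=
    (measurableSet_eq_fun (measurable_quant P) (measurable_quant Q)).compl
  calc _ = Measure.map Real.sigmoid (Measure.comap Real.sigmoid 𝕌) {t | quant P t ≠ quant Q t} :=
        (Measure.map_apply hσ.measurable hne).symm
    _ ≤ ENNReal.ofReal α := by rwa [hmap]

/-- The common trimming distance `T_α(P,Q)` vanishes iff `P` and `Q`
are non-decreasing, left-continuous transforms of a common random signal, the transforms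
differing with probability at most `α`. -/
theorem common_trimming_zero_iff_monotone_transforms
    (α : ℝ) (hα0 : 0 ≤ α) (hα1 : α < 1)
    (P Q : Measure ℝ) (hP : IsProbabilityMeasure P) (hQ : IsProbabilityMeasure Q)
    (hmP : FiniteSecondMoment P) (hmQ : FiniteSecondMoment Q) :
    (∃ h h' : ℝ → ℝ, IsTrimmingFun α h h' ∧
      ∃ Ph Qh : Measure ℝ, IsProbabilityMeasure Ph ∧ IsProbabilityMeasure Qh ∧
        (∀ x, distFun Ph x = h (distFun P x)) ∧
        (∀ x, distFun Qh x = h (distFun Q x)) ∧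
        W2 Ph Qh = 0) ↔
    (∃ (Ω : Type) (_ : MeasurableSpace Ω) (Pr : Measure Ω), IsProbabilityMeasure Pr ∧
      ∃ (Z : Ω → ℝ) (φ₁ φ₂ : ℝ → ℝ), Measurable Z ∧
        Monotone φ₁ ∧ Monotone φ₂ ∧
        (∀ x, ContinuousWithinAt φ₁ (Set.Iio x) x) ∧
        (∀ x, ContinuousWithinAt φ₂ (Set.Iio x) x) ∧
        Measure.map (fun ω => φ₁ (Z ω)) Pr = P ∧
        Measure.map (fun ω => φ₂ (Z ω)) Pr = Q ∧
        Pr {ω | φ₁ (Z ω) ≠ φ₂ (Z ω)} ≤ ENNReal.ofReal α) := by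
  constructor
  · rintro ⟨h, h', ht, Ph, Qh, _, _, hPh, hQh, hW⟩
    exact exists_monotone_transforms_of_unif_le P Q
      (unif_quant_ne_le_of_trimming hα1 hmP hmQ ht hPh hQh hW)
  · rintro ⟨Ω, _, Pr, _, Z, φ₁, φ₂, hZ, hφ₁, hφ₂, -, -, hP', hQ', hPr⟩
    exact exists_trimming_of_unif_le hα0 hα1 P Q
      (unif_quant_ne_le_of_monotone_transforms hZ hφ₁ hφ₂ hP' hQ' hPr)

end
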